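/- For t > 0 and real x with 2t|x| < 1, the exponential generating function of the Bessel polynomials satisfies Σ_{n≥0} y_n(t) x^n / n! = exp(1/t − (1/t)√(1−2tx)) / √(1−2tx), where y_n(t) = Σ_{j=0}^n ((n+j)!/(j!(n−j)!)) (t/2)^j. -/

import Mathlib

/-!
The Taylor coefficients at `0` of `F(z) = exp((1 - √(1 - 2tz))/t) / √(1 - 2tz)` are the Bessel
values `y n t`. Writing `q = 1 - 2tz` and `H = exp((1 - √q)/t)`, one has `H' = F` and
`q F' = t F + H`; differentiating once more gives `q F'' = 3t F' + F`, and differentiating that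
`n` times gives `q F⁽ⁿ⁺²⁾ = (2n+3) t F⁽ⁿ⁺¹⁾ + F⁽ⁿ⁾`. At `z = 0` this is the three-term recurrence
of the Bessel polynomials, with the same initial values `1` and `1 + t`. The principal branch of
`√q` is holomorphic on the disc `|z| < 1/(2t)`, so the Taylor series of `F` converges to `F` there.
-/

/-- The Bessel polynomials. -/
noncomputable def y (n : ℕ) (t : ℝ) : ℝ :=
  ∑ j ∈ Finset.range (n + 1),
    ((n + j).factorial : ℝ) / (j.factorial * (n - j).factorial) * (t / 2) ^ j

open Complex Finset Nat

theorem Nat.factorial_two_mul_eq_mul_doubleFactorial (j : ℕ) :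
    (2 * j)! = 2 ^ j * j ! * (2 * j - 1)‼ := by
  cases j with
  | zero => rfl
  | succ k =>
    rw [show 2 * (k + 1) = 2 * k + 1 + 1 by ring, factorial_eq_mul_doubleFactorial,
      show 2 * k + 1 + 1 = 2 * (k + 1) by ring, doubleFactorial_two_mul]
    rfl

/- The coefficient of `t ^ j` in `y n t`, since `(2j)! / (j! 2^j) = (2j - 1)‼`. Written with
`choose`, it vanishes for `j > n`, so sums over it may run over any longer range. -/
def besselCoeff (n j : ℕ) : ℕ := (n + j).choose (2 * j) * (2 * j - 1)‼

@[simp] lemma besselCoeff_zero_right (n : ℕ) : besselCoeff n 0 = 1 := by simp [besselCoeff]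

lemma besselCoeff_eq_zero_of_lt {n j : ℕ} (h : n < j) : besselCoeff n j = 0 := by
  simp [besselCoeff, choose_eq_zero_of_lt (by omega : n + j < 2 * j)]

lemma besselCoeff_add_two_succ (n j : ℕ) :
    besselCoeff (n + 2) (j + 1) = (2 * n + 3) * besselCoeff (n + 1) j + besselCoeff n (j + 1) := by
  have hodd : (2 * (j + 1) - 1)‼ = (2 * j + 1) * (2 * j - 1)‼ := doubleFactorial_add_one (2 * j)
  have hpascal : (n + 2 + (j + 1)).choose (2 * (j + 1)) = (n + j + 1).choose (2 * j)
      + 2 * (n + j + 1).choose (2 * j + 1) + (n + j + 1).choose (2 * (j + 1)) := by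
    have (N k : ℕ) :
        (N + 2).choose (k + 2) = N.choose k + 2 * N.choose (k + 1) + N.choose (k + 2) := by
      rw [choose_succ_succ' (N + 1) (k + 1), choose_succ_succ' N k, choose_succ_succ' N (k + 1)]
      ring
    rw [show n + 2 + (j + 1) = n + j + 1 + 2 by ring, show 2 * (j + 1) = 2 * j + 2 by ring, this]
  have hratio : (2 * j + 1) * (2 * (n + j + 1).choose (2 * j + 1) + (n + j + 1).choose (2 * j))
      = (2 * n + 3) * (n + j + 1).choose (2 * j) := by
    rcases le_or_gt j (n + 1) with hj | hj
    · have := choose_succ_right_eq (n + j + 1) (2 * j)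
      rw [show n + j + 1 - 2 * j = n + 1 - j by omega] at this
      zify [hj] at this ⊢
      linear_combination 2 * this
    · simp [choose_eq_zero_of_lt (by omega : n + j + 1 < 2 * j),
        choose_eq_zero_of_lt (by omega : n + j + 1 < 2 * j + 1)]
  simp only [besselCoeff, hodd, hpascal, show n + 1 + j = n + j + 1 by ring,
    show n + (j + 1) = n + j + 1 by ring]
  linear_combination (2 * j - 1)‼ * hratio

lemma y_eq_sum_besselCoeff {n M : ℕ} (h : n < M) (t : ℝ) :
    y n t = ∑ j ∈ range M, (besselCoeff n j : ℝ) * t ^ j := by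
  rw [← sum_subset (range_subset_range.2 h) fun j _ hj ↦ by
    rw [besselCoeff_eq_zero_of_lt (by simpa using hj), cast_zero, zero_mul]]
  refine sum_congr rfl fun j hj ↦ ?_
  have hjn : j ≤ n := mem_range_succ_iff.1 hj
  have hchoose := choose_mul_factorial_mul_factorial (by omega : 2 * j ≤ n + j)
  rw [show n + j - 2 * j = n - j by omega, factorial_two_mul_eq_mul_doubleFactorial] at hchoose
  rw [besselCoeff, ← hchoose]
  push_cast
  rw [div_pow]
  field_simp

lemma y_add_two (n : ℕ) (t : ℝ) : y (n + 2) t = (2 * n + 3) * t * y (n + 1) t + y n t := by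
  rw [y_eq_sum_besselCoeff (by omega : n + 2 < n + 3),
    y_eq_sum_besselCoeff (by omega : n + 1 < n + 2), y_eq_sum_besselCoeff (by omega : n < n + 3),
    sum_range_succ' _ (n + 2), sum_range_succ' (fun j ↦ (besselCoeff n j : ℝ) * t ^ j) (n + 2),
    mul_sum]
  simp only [besselCoeff_add_two_succ, besselCoeff_zero_right]
  push_cast
  rw [← add_assoc, ← sum_add_distrib]
  congr 1
  exact sum_congr rfl fun j _ ↦ by ring

theorem AnalyticOnNhd.iteratedDeriv_affine_ode {𝕜 : Type*} [NontriviallyNormedField 𝕜]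
    [CompleteSpace 𝕜] {f : 𝕜 → 𝕜} {U : Set 𝕜} (hU : IsOpen U) (hf : AnalyticOnNhd 𝕜 f U)
    {a b c d : 𝕜} (hode : ∀ z ∈ U, (a + b * z) * deriv (deriv f) z = c * deriv f z + d * f z)
    (n : ℕ) {z : 𝕜} (hz : z ∈ U) :
    (a + b * z) * iteratedDeriv (n + 2) f z
      = (c - n * b) * iteratedDeriv (n + 1) f z + d * iteratedDeriv n f z := by
  have hderiv (k : ℕ) {w : 𝕜} (hw : w ∈ U) :
      HasDerivAt (iteratedDeriv k f) (iteratedDeriv (k + 1) f w) w := by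
    rw [iteratedDeriv_succ, iteratedDeriv_eq_iterate]
    exact (hf.iterated_deriv k w hw).differentiableAt.hasDerivAt
  induction n generalizing z with
  | zero => simpa [iteratedDeriv_succ, iteratedDeriv_one] using hode z hz
  | succ n ih =>
    have hlhs := ((hasDerivAt_id' z).const_mul b |>.const_add a).mul (hderiv (n + 2) hz)
    have hrhs := ((hderiv (n + 1) hz).const_mul (c - n * b)).add ((hderiv n hz).const_mul d)
    have heq : (fun w ↦ (a + b * w) * iteratedDeriv (n + 2) f w) =ᶠ[nhds z]
        fun w ↦ (c - n * b) * iteratedDeriv (n + 1) f w + d * iteratedDeriv n f w :=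
      Filter.eventuallyEq_of_mem (hU.mem_nhds hz) fun w hw ↦ ih hw
    have hdiff := (hlhs.congr_of_eventuallyEq heq.symm).unique hrhs
    rw [show n + 1 + 1 = n + 2 from rfl] at hdiff
    rw [show n + 1 + 2 = n + 2 + 1 from rfl, show n + 1 + 1 = n + 2 from rfl]
    push_cast
    linear_combination hdiff

lemma hasDerivAt_one_sub_mul {𝕜 : Type*} [NontriviallyNormedField 𝕜] (c z : 𝕜) :
    HasDerivAt (fun w ↦ 1 - c * w) (-c) z := by
  simpa using ((hasDerivAt_id' z).const_mul c).const_sub 1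

def besselDomain (t : ℂ) : Set ℂ := {z | 1 - 2 * t * z ∈ slitPlane}

noncomputable def besselRoot (t z : ℂ) : ℂ := (1 - 2 * t * z) ^ (1 / 2 : ℂ)

noncomputable def besselEGF (t z : ℂ) : ℂ := cexp ((1 - besselRoot t z) / t) / besselRoot t z

lemma isOpen_besselDomain (t : ℂ) : IsOpen (besselDomain t) :=
  isOpen_slitPlane.preimage (by fun_prop)

lemma ball_subset_besselDomain {t : ℝ} (ht : 0 < t) :
    Metric.ball (0 : ℂ) (1 / (2 * t)) ⊆ besselDomain t := by
  intro z hz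
  rw [mem_ball_zero_iff, lt_div_iff₀ (by positivity)] at hz
  have hnorm : ‖-(2 * t * z)‖ < 1 := by
    rw [norm_neg, norm_mul, norm_mul, norm_real, Real.norm_of_nonneg ht.le, Complex.norm_two]
    linarith
  simpa [besselDomain, sub_eq_add_neg] using mem_slitPlane_of_norm_lt_one hnorm

lemma besselRoot_sq (t z : ℂ) : besselRoot t z ^ 2 = 1 - 2 * t * z := by
  rw [besselRoot, one_div]
  exact cpow_ofNat_inv_pow _ 2

section
variable {t z : ℂ}

lemma besselRoot_ne_zero (hz : z ∈ besselDomain t) : besselRoot t z ≠ 0 := by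
  intro h
  apply slitPlane_ne_zero hz
  rw [← besselRoot_sq, h, zero_pow two_ne_zero]

lemma hasDerivAt_besselRoot (hz : z ∈ besselDomain t) :
    HasDerivAt (besselRoot t) (-t / besselRoot t z) z := by
  refine ((hasDerivAt_one_sub_mul (2 * t) z).cpow_const (c := 1 / 2) hz).congr_deriv ?_
  have hS := besselRoot_ne_zero hz
  rw [cpow_sub _ _ (slitPlane_ne_zero hz), cpow_one, ← besselRoot, ← besselRoot_sq]
  field_simp

lemma hasDerivAt_exp_besselRoot (ht : t ≠ 0) (hz : z ∈ besselDomain t) :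
    HasDerivAt (fun w ↦ cexp ((1 - besselRoot t w) / t)) (besselEGF t z) z := by
  refine (((hasDerivAt_besselRoot hz).const_sub 1).div_const t).cexp.congr_deriv ?_
  rw [besselEGF]
  field_simp

lemma hasDerivAt_besselEGF (ht : t ≠ 0) (hz : z ∈ besselDomain t) :
    HasDerivAt (besselEGF t)
      ((t * besselEGF t z + cexp ((1 - besselRoot t z) / t)) / (1 - 2 * t * z)) z := by
  refine ((hasDerivAt_exp_besselRoot ht hz).div (hasDerivAt_besselRoot hz)
    (besselRoot_ne_zero hz)).congr_deriv ?_
  have hS := besselRoot_ne_zero hz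
  rw [besselEGF, ← besselRoot_sq]
  field_simp
  ring

lemma differentiableOn_besselEGF (ht : t ≠ 0) : DifferentiableOn ℂ (besselEGF t) (besselDomain t) :=
  fun _ hz ↦ (hasDerivAt_besselEGF ht hz).differentiableAt.differentiableWithinAt

lemma besselEGF_ode (ht : t ≠ 0) (hz : z ∈ besselDomain t) :
    (1 - 2 * t * z) * deriv (deriv (besselEGF t)) z
      = 3 * t * deriv (besselEGF t) z + besselEGF t z := by
  have hderiv : deriv (besselEGF t) =ᶠ[nhds z]
      fun w ↦ (t * besselEGF t w + cexp ((1 - besselRoot t w) / t)) / (1 - 2 * t * w) :=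
    Filter.eventuallyEq_of_mem ((isOpen_besselDomain t).mem_nhds hz) fun w hw ↦
      (hasDerivAt_besselEGF ht hw).deriv
  have hderiv₂ : HasDerivAt
      (fun w ↦ (t * besselEGF t w + cexp ((1 - besselRoot t w) / t)) / (1 - 2 * t * w)) _ z :=
    (((hasDerivAt_besselEGF ht hz).const_mul t).add (hasDerivAt_exp_besselRoot ht hz)).div
      (hasDerivAt_one_sub_mul (2 * t) z) (slitPlane_ne_zero hz)
  rw [hderiv.deriv_eq, hderiv₂.deriv, (hasDerivAt_besselEGF ht hz).deriv, Pi.add_apply]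
  have hq := slitPlane_ne_zero hz
  field_simp
  ring

end

lemma iteratedDeriv_besselEGF_zero {t : ℝ} (ht : t ≠ 0) (n : ℕ) :
    iteratedDeriv n (besselEGF t) 0 = y n t := by
  have ht' : (t : ℂ) ≠ 0 := ofReal_ne_zero.2 ht
  have h0 : (0 : ℂ) ∈ besselDomain t := by simp [besselDomain]
  have hroot : besselRoot t 0 = 1 := by simp [besselRoot]
  have hF0 : besselEGF t 0 = 1 := by simp [besselEGF, hroot]
  induction n using Nat.twoStepInduction with
  | zero => simp [hF0, y]
  | one =>
    rw [iteratedDeriv_one, (hasDerivAt_besselEGF ht' h0).deriv]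
    simp [hF0, hroot, y, sum_range_succ]
    ring
  | more n ih₀ ih₁ =>
    have hrec := ((differentiableOn_besselEGF ht').analyticOnNhd (isOpen_besselDomain t))
      |>.iteratedDeriv_affine_ode (isOpen_besselDomain t) (a := 1) (b := -2 * t) (c := 3 * t)
        (d := 1) (fun z hz ↦ by linear_combination besselEGF_ode ht' hz) n h0
    rw [mul_zero, add_zero, one_mul] at hrec
    rw [hrec, ih₀, ih₁, y_add_two]
    push_cast
    ring

lemma besselEGF_ofReal {t x : ℝ} (h : 0 < 1 - 2 * t * x) :
    besselEGF t x = (Real.exp (1 / t - (1 / t) * √(1 - 2 * t * x)) / √(1 - 2 * t * x) : ℝ) := by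
  have hroot : besselRoot t x = (√(1 - 2 * t * x) : ℝ) := by
    rw [besselRoot, Real.sqrt_eq_rpow, ofReal_cpow h.le]
    push_cast
    rfl
  rw [besselEGF, hroot]
  push_cast
  congr 2
  ring

theorem stmt_17 (t x : ℝ) (ht : 0 < t) (hx : 2 * t * |x| < 1) :
    HasSum (fun n : ℕ => y n t * x ^ n / n.factorial)
      (Real.exp (1 / t - (1 / t) * Real.sqrt (1 - 2 * t * x)) / Real.sqrt (1 - 2 * t * x)) := by
  have hx' : (x : ℂ) ∈ Metric.ball 0 (1 / (2 * t)) := by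
    rw [mem_ball_zero_iff, norm_real, Real.norm_eq_abs, lt_div_iff₀ (by positivity)]
    linarith
  have hpos : 0 < 1 - 2 * t * x := by
    nlinarith [mul_le_mul_of_nonneg_left (le_abs_self x) (by positivity : (0 : ℝ) ≤ 2 * t)]
  have htaylor := hasSum_taylorSeries_on_ball
    ((differentiableOn_besselEGF (ofReal_ne_zero.2 ht.ne')).mono (ball_subset_besselDomain ht)) hx'
  rw [besselEGF_ofReal hpos] at htaylor
  refine hasSum_ofReal.1 (htaylor.congr_fun fun n ↦ ?_)
  rw [iteratedDeriv_besselEGF_zero ht.ne', smul_eq_mul, smul_eq_mul]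
  push_cast
  ring
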